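/- Let p > 1/2 and let n ≥ 2 be an integer with β_n > 2q, where β_n = (1 − 1/n)/(16p⁴)^{1/(n−1)} and B_n = (β_n − 2q)/(1 − 2q). Then for every y ∈ [0, B_n] and every integer i with 1 ≤ i ≤ n, one has 0 ≤ G^{i−1}(y) ≤ β_n^{i−1}·y, where G^{i−1} denotes the (i−1)-fold iterate of G. -/
import Mathlib


open Set Filter Topology

/-- G(t) = t(t + 2q(1−t)). -/
noncomputable def G (q : ℝ) (t : ℝ) : ℝ := t * (t + 2*q*(1 - t))

/-- f(t) = 2p·t + 2q·(1−t). -/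
noncomputable def f (p q : ℝ) (t : ℝ) : ℝ := 2*p*t + 2*q*(1 - t)

/-- β_n = (1 − 1/n) / (16p⁴)^{1/(n−1)}. -/
noncomputable def betaSeq (p : ℝ) (n : ℕ) : ℝ :=
  (1 - 1/(n:ℝ)) / (16*p^4) ^ ((1:ℝ)/((n:ℝ) - 1))

/-- B_n = (β_n − 2q)/(1 − 2q). -/
noncomputable def BSeq (p q : ℝ) (n : ℕ) : ℝ := (betaSeq p n - 2*q) / (1 - 2*q)
/-- for p > 1/2 and n ≥ 2 with β_n > 2q, for every y ∈ [0, B_n] and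
1 ≤ i ≤ n one has 0 ≤ G^{i−1}(y) ≤ β_n^{i−1}·y. -/
theorem iterate_G_bound (p q : ℝ) (hq : 0 ≤ q) (hpq : p + q = 1) (hp : p > 1/2)
    (n : ℕ) (hn : 2 ≤ n) (hβ : betaSeq p n > 2*q) :
    ∀ y ∈ Set.Icc (0:ℝ) (BSeq p q n), ∀ i : ℕ, 1 ≤ i → i ≤ n →
      0 ≤ (G q)^[i - 1] y ∧ (G q)^[i - 1] y ≤ betaSeq p n ^ (i - 1) * y := by
  intro y hy i hi1 hin
  obtain ⟨hy0, hyB⟩ := hy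
  have hq2 : 2*q < 1 := by linarith
  have hn2 : (2:ℝ) ≤ (n:ℝ) := by exact_mod_cast hn
  have hd : (1:ℝ) < (16*p^4) ^ ((1:ℝ)/((n:ℝ) - 1)) := by
    refine (Real.one_lt_rpow_iff_of_pos (by positivity)).mpr (Or.inl ⟨?_, ?_⟩)
    · have ha : (1:ℝ) < 2*p := by linarith
      have h1 : (1:ℝ) < (2*p)^2 := by nlinarith
      have h2 : (1:ℝ) < ((2*p)^2)^2 := by nlinarith
      calc (1:ℝ) < ((2*p)^2)^2 := h2
        _ = 16*p^4 := by ring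
    · have h1 : (0:ℝ) < (n:ℝ) - 1 := by linarith
      positivity
  have hβ1 : betaSeq p n < 1 := by
    unfold betaSeq
    rw [div_lt_one (lt_trans zero_lt_one hd)]
    have hnum : 1 - 1/(n:ℝ) < 1 := by
      have : 0 < 1/(n:ℝ) := by positivity
      linarith
    linarith
  have hβ0 : 0 ≤ betaSeq p n := le_trans (by positivity) hβ.le
  have key : ∀ k : ℕ, 0 ≤ (G q)^[k] y ∧ (G q)^[k] y ≤ betaSeq p n ^ k * y := by
    intro k
    induction k with
    | zero => simpa using hy0
    | succ k ih =>
      obtain ⟨h0, h1⟩ := ih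
      set t := (G q)^[k] y with ht
      have hpow : betaSeq p n ^ k * y ≤ y := by
        calc betaSeq p n ^ k * y ≤ 1 * y :=
              mul_le_mul_of_nonneg_right (pow_le_one₀ hβ0 hβ1.le) hy0
          _ = y := one_mul y
      have htB : t ≤ BSeq p q n := le_trans (le_trans h1 hpow) hyB
      have hB' : (1 - 2*q) * BSeq p q n = betaSeq p n - 2*q := by
        unfold BSeq
        rw [mul_comm]
        exact div_mul_cancel₀ _ (by linarith)
      have h2 : t + 2*q*(1 - t) ≤ betaSeq p n := by
        have := mul_le_mul_of_nonneg_left htB (by linarith : (0:ℝ) ≤ 1 - 2*q)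
        nlinarith
      rw [Function.iterate_succ_apply', ← ht]
      unfold G
      constructor
      · exact mul_nonneg h0 (by nlinarith [mul_nonneg h0 (by linarith : (0:ℝ) ≤ 1 - 2*q)])
      · have h3 : t * (t + 2*q*(1 - t)) ≤ t * betaSeq p n :=
          mul_le_mul_of_nonneg_left h2 h0
        have h4 : t * betaSeq p n ≤ (betaSeq p n ^ k * y) * betaSeq p n :=
          mul_le_mul_of_nonneg_right h1 hβ0
        calc t * (t + 2*q*(1 - t)) ≤ (betaSeq p n ^ k * y) * betaSeq p n := le_trans h3 h4
          _ = betaSeq p n ^ (k+1) * y := by ring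
  exact key (i - 1)
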